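/- arXiv:1502.04969 — 2 statements merged into one kernel-verified Lean document; each statement's English description precedes it below -/
import Mathlib

section
/- Let M be a 3×3 real symmetric matrix. Then c(M) = (1/2)((trace M)² − trace(M²)) equals the minimum over all orthonormal bases (ν₁, ν₂, ν₃) of ℝ³ of σ₂(ν₁ᵀMν₁, ν₂ᵀMν₂, ν₃ᵀMν₃), where σ₂(a,b,c) = ab + ac + bc. The minimum is attained at an orthonormal eigenbasis of M. -/
/-!
Stack the basis vectors as the rows of a matrix `N`, so that `N * Nᵀ = 1`. Then `A = N M Nᵀ`
is symmetric, has diagonal `(νᵢ ⬝ᵥ M νᵢ)ᵢ`, and has the same `trace` and `trace (A * A)` as `M`.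
For a symmetric `3 × 3` matrix, `(tr A)² - tr (A²) = 2 σ₂(diag A) - 2 (A₀₁² + A₀₂² + A₁₂²)`, so
`σ₂` of the diagonal exceeds `c(M)` by the sum of the squared off-diagonal entries of `A`; these
vanish for an eigenbasis.
-/

open Matrix

def sigma2 {R : Type*} [CommRing R] (a : Fin 3 → R) : R :=
  a 0 * a 1 + a 0 * a 2 + a 1 * a 2

namespace Matrix

section Conjugation

variable {m n R : Type*} [Fintype n] [CommSemiring R]

theorem IsSymm.mul_mul_transpose {M : Matrix n n R} (hM : M.IsSymm) (N : Matrix m n R) :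
    (N * M * Nᵀ).IsSymm := by
  rw [IsSymm, transpose_mul, transpose_mul, transpose_transpose, hM.eq, Matrix.mul_assoc]

theorem mul_mul_transpose_apply (N : Matrix m n R) (M : Matrix n n R) (i j : m) :
    (N * M * Nᵀ) i j = N i ⬝ᵥ M *ᵥ N j := by
  rw [mul_apply', dotProduct_mulVec]
  rfl

variable [Fintype m] [DecidableEq n] {N : Matrix m n R}

theorem trace_mul_mul_transpose (hN : Nᵀ * N = 1) (M : Matrix n n R) :
    trace (N * M * Nᵀ) = trace M := by
  rw [trace_mul_cycle, hN, Matrix.one_mul]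

theorem mul_mul_transpose_mul_self (hN : Nᵀ * N = 1) (M : Matrix n n R) :
    N * M * Nᵀ * (N * M * Nᵀ) = N * (M * M) * Nᵀ := by
  simp only [Matrix.mul_assoc]
  rw [← Matrix.mul_assoc Nᵀ, hN, Matrix.one_mul]

end Conjugation

theorem of_mul_transpose_eq_one_iff {n R : Type*} [Fintype n] [DecidableEq n] [Semiring R]
    (ν : n → n → R) :
    of ν * (of ν)ᵀ = 1 ↔ ∀ i j, ν i ⬝ᵥ ν j = if i = j then 1 else 0 := by
  simp only [← Matrix.ext_iff, mul_apply', one_apply]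
  rfl

theorem IsSymm.exists_orthonormal_eigenbasis {n : Type*} [Fintype n] [DecidableEq n]
    {M : Matrix n n ℝ} (hM : M.IsSymm) :
    ∃ ν : n → n → ℝ, of ν * (of ν)ᵀ = 1 ∧ ∀ i, ∃ μ : ℝ, M *ᵥ ν i = μ • ν i := by
  have hH : M.IsHermitian := isHermitian_iff_isSymm.mpr hM
  refine ⟨fun i => hH.eigenvectorBasis i, ?_, fun i => ⟨_, hH.mulVec_eigenvectorBasis i⟩⟩
  have := Unitary.coe_star_mul_self hH.eigenvectorUnitary
  rwa [star_eq_conjTranspose, conjTranspose_eq_transpose_of_trivial] at this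

section Dim3

variable {R : Type*} [CommRing R]

theorem IsSymm.trace_sq_sub_trace_mul_self {A : Matrix (Fin 3) (Fin 3) R} (hA : A.IsSymm) :
    trace A ^ 2 - trace (A * A) =
      2 * (sigma2 A.diag - (A 0 1 ^ 2 + A 0 2 ^ 2 + A 1 2 ^ 2)) := by
  simp only [trace, diag, sigma2, mul_apply, Fin.sum_univ_three, hA.apply 0 1, hA.apply 0 2,
    hA.apply 1 2]
  ring

theorem trace_sq_sub_trace_mul_self_eq {M : Matrix (Fin 3) (Fin 3) R} (hM : M.IsSymm)
    {ν : Fin 3 → Fin 3 → R} (hν : of ν * (of ν)ᵀ = 1) :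
    trace M ^ 2 - trace (M * M) =
      2 * (sigma2 (fun i => ν i ⬝ᵥ M *ᵥ ν i) -
        ((ν 0 ⬝ᵥ M *ᵥ ν 1) ^ 2 + (ν 0 ⬝ᵥ M *ᵥ ν 2) ^ 2 + (ν 1 ⬝ᵥ M *ᵥ ν 2) ^ 2)) := by
  have hν' : (of ν)ᵀ * of ν = 1 := mul_eq_one_comm.mp hν
  rw [← trace_mul_mul_transpose hν' M, ← trace_mul_mul_transpose hν' (M * M),
    ← mul_mul_transpose_mul_self hν', (hM.mul_mul_transpose _).trace_sq_sub_trace_mul_self]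
  simp only [sigma2, diag_apply, mul_mul_transpose_apply]
  rfl

end Dim3

variable {M : Matrix (Fin 3) (Fin 3) ℝ} {ν : Fin 3 → Fin 3 → ℝ}

theorem half_trace_sq_sub_trace_mul_self_le (hM : M.IsSymm) (hν : of ν * (of ν)ᵀ = 1) :
    (1 / 2) * (trace M ^ 2 - trace (M * M)) ≤ sigma2 (fun i => ν i ⬝ᵥ M *ᵥ ν i) := by
  rw [trace_sq_sub_trace_mul_self_eq hM hν]
  nlinarith [sq_nonneg (ν 0 ⬝ᵥ M *ᵥ ν 1), sq_nonneg (ν 0 ⬝ᵥ M *ᵥ ν 2),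
    sq_nonneg (ν 1 ⬝ᵥ M *ᵥ ν 2)]

theorem half_trace_sq_sub_trace_mul_self_eq (hM : M.IsSymm) (hν : of ν * (of ν)ᵀ = 1)
    (heig : ∀ i, ∃ μ : ℝ, M *ᵥ ν i = μ • ν i) :
    (1 / 2) * (trace M ^ 2 - trace (M * M)) = sigma2 (fun i => ν i ⬝ᵥ M *ᵥ ν i) := by
  have horth := (of_mul_transpose_eq_one_iff ν).mp hν
  have hoff : ∀ i j, i ≠ j → ν i ⬝ᵥ M *ᵥ ν j = 0 := fun i j hij => by
    obtain ⟨μ, hμ⟩ := heig j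
    rw [hμ, dotProduct_smul, horth, if_neg hij, smul_zero]
  rw [trace_sq_sub_trace_mul_self_eq hM hν, hoff 0 1 (by decide), hoff 0 2 (by decide),
    hoff 1 2 (by decide)]
  ring

end Matrix

theorem stmt_7 (M : Matrix (Fin 3) (Fin 3) ℝ) (hM : M.IsSymm) :
    IsLeast {x : ℝ | ∃ ν : Fin 3 → (Fin 3 → ℝ),
        (∀ i j, ν i ⬝ᵥ ν j = if i = j then (1 : ℝ) else 0) ∧
        x = (ν 0 ⬝ᵥ M.mulVec (ν 0)) * (ν 1 ⬝ᵥ M.mulVec (ν 1)) +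
            (ν 0 ⬝ᵥ M.mulVec (ν 0)) * (ν 2 ⬝ᵥ M.mulVec (ν 2)) +
            (ν 1 ⬝ᵥ M.mulVec (ν 1)) * (ν 2 ⬝ᵥ M.mulVec (ν 2))}
      ((1 / 2) * ((Matrix.trace M) ^ 2 - Matrix.trace (M * M))) ∧
    ∃ ν : Fin 3 → (Fin 3 → ℝ),
      (∀ i j, ν i ⬝ᵥ ν j = if i = j then (1 : ℝ) else 0) ∧
      (∀ i, ∃ μ : ℝ, M.mulVec (ν i) = μ • ν i) ∧
      (1 / 2) * ((Matrix.trace M) ^ 2 - Matrix.trace (M * M)) =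
        (ν 0 ⬝ᵥ M.mulVec (ν 0)) * (ν 1 ⬝ᵥ M.mulVec (ν 1)) +
        (ν 0 ⬝ᵥ M.mulVec (ν 0)) * (ν 2 ⬝ᵥ M.mulVec (ν 2)) +
        (ν 1 ⬝ᵥ M.mulVec (ν 1)) * (ν 2 ⬝ᵥ M.mulVec (ν 2)) := by
  obtain ⟨ν, hν, heig⟩ := hM.exists_orthonormal_eigenbasis
  have hmin := half_trace_sq_sub_trace_mul_self_eq hM hν heig
  have horth := (of_mul_transpose_eq_one_iff ν).mp hν
  refine ⟨⟨⟨ν, horth, hmin⟩, ?_⟩, ν, horth, heig, hmin⟩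
  rintro x ⟨ν', hν', rfl⟩
  exact half_trace_sq_sub_trace_mul_self_le hM ((of_mul_transpose_eq_one_iff ν').mpr hν')
end

section
/- Define f : ℝ³ → ℝ by f(x,y,z) = x·max(y,|x|) + x·max(z,|x|) + max(y,|x|)·max(z,|x|), and let σ̄ = f ∘ sort where sort arranges coordinates in nondecreasing order. Then σ̄ is nondecreasing in each of its three arguments on all of ℝ³. -/
/-- The nondecreasing rearrangement of three real numbers. -/
def sort3 (a b c : ℝ) : ℝ × ℝ × ℝ :=
  (min a (min b c), max (min a b) (min c (max a b)), max a (max b c))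

/-- The auxiliary function `f(x,y,z) = x·max(y,|x|) + x·max(z,|x|) + max(y,|x|)·max(z,|x|)`. -/
def fExt (x y z : ℝ) : ℝ :=
  x * max y |x| + x * max z |x| + max y |x| * max z |x|

/-- The monotone extension `σ̄ = f ∘ sort`. -/
def sigmaBar (a b c : ℝ) : ℝ :=
  fExt (sort3 a b c).1 (sort3 a b c).2.1 (sort3 a b c).2.2

lemma fExt_eq (x y z : ℝ) :
    fExt x y z = (x + max y |x|) * (x + max z |x|) - x ^ 2 := by
  unfold fExt; ring

lemma habs_mono {x x' : ℝ} (hx : x ≤ x') : x + |x| ≤ x' + |x'| := by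
  rcases abs_cases x with ⟨e, h⟩ | ⟨e, h⟩ <;> rcases abs_cases x' with ⟨e', h'⟩ | ⟨e', h'⟩ <;>
    rw [e, e'] <;> linarith

set_option maxHeartbeats 2000000 in
lemma key (x y z x' y' z' : ℝ) (hxy : x ≤ y) (hyz : y ≤ z)
    (hxy' : x' ≤ y') (hyz' : y' ≤ z')
    (hx : x ≤ x') (hy : y ≤ y') (hz : z ≤ z') :
    fExt x y z ≤ fExt x' y' z' := by
  rw [fExt_eq, fExt_eq]
  set P : ℝ := x + max y |x| with hPdef
  set Q : ℝ := x + max z |x| with hQdef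
  set P' : ℝ := x' + max y' |x'| with hP'def
  set Q' : ℝ := x' + max z' |x'| with hQ'def
  have habs : 0 ≤ x + |x| := by rcases abs_cases x with ⟨e, h⟩ | ⟨e, h⟩ <;> rw [e] <;> linarith
  have habs' : 0 ≤ x' + |x'| := by
    rcases abs_cases x' with ⟨e, h⟩ | ⟨e, h⟩ <;> rw [e] <;> linarith
  have hP0 : 0 ≤ P := by have := le_max_right y |x|; simp [hPdef]; linarith
  have hQ0 : 0 ≤ Q := by have := le_max_right z |x|; simp [hQdef]; linarith
  have hP'0 : 0 ≤ P' := by have := le_max_right y' |x'|; simp [hP'def]; linarith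
  have hQ'0 : 0 ≤ Q' := by have := le_max_right z' |x'|; simp [hQ'def]; linarith
  have hPy : x + y ≤ P := by rw [hPdef]; have := le_max_left y |x|; linarith
  have hQz : x + z ≤ Q := by rw [hQdef]; have := le_max_left z |x|; linarith
  have hP'y : x' + y' ≤ P' := by rw [hP'def]; have := le_max_left y' |x'|; linarith
  have hQ'z : x' + z' ≤ Q' := by rw [hQ'def]; have := le_max_left z' |x'|; linarith
  have hP2' : 2 * x' ≤ P' := by
    have := le_max_right y' |x'|; have := le_abs_self x'; simp [hP'def]; linarith
  have hQ2' : 2 * x' ≤ Q' := by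
    have := le_max_right z' |x'|; have := le_abs_self x'; simp [hQ'def]; linarith
  have hPmax : P = max (x + y) (x + |x|) := by rw [hPdef, ← max_add_add_left]
  have hQmax : Q = max (x + z) (x + |x|) := by rw [hQdef, ← max_add_add_left]
  have hP'max : P' = max (x' + y') (x' + |x'|) := by rw [hP'def, ← max_add_add_left]
  have hQ'max : Q' = max (x' + z') (x' + |x'|) := by rw [hQ'def, ← max_add_add_left]
  have hPP' : P ≤ P' := by
    rw [hPmax, hP'max]; exact max_le_max (by linarith) (habs_mono hx)
  have hQQ' : Q ≤ Q' := by
    rw [hQmax, hQ'max]; exact max_le_max (by linarith) (habs_mono hx)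
  have hPQ : P * Q ≤ P' * Q' := mul_le_mul hPP' hQQ' hQ0 hP'0
  rcases le_or_gt x' 0 with hx'0 | hx'0
  · -- both nonpositive: x'^2 ≤ x^2
    nlinarith
  rcases le_or_gt 0 x with hx0 | hx0
  · -- both nonnegative
    have hM : max y |x| ≤ max y' |x'| := by
      rw [abs_of_nonneg hx0, abs_of_nonneg (le_of_lt hx'0)]
      exact max_le_max hy hx
    have hN : max z |x| ≤ max z' |x'| := by
      rw [abs_of_nonneg hx0, abs_of_nonneg (le_of_lt hx'0)]
      exact max_le_max hz hx
    have h1 : x' - x ≤ P' - P := by rw [hPdef, hP'def]; linarith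
    have h2 : x' - x ≤ Q' - Q := by rw [hQdef, hQ'def]; linarith
    have hP2 : 2 * x ≤ P := by
      have := le_max_right y |x|; have := le_abs_self x; simp [hPdef]; linarith
    have ht : 0 ≤ x' - x := by linarith
    nlinarith [mul_nonneg (by linarith : (0:ℝ) ≤ P' - P - (x' - x)) hQ'0,
      mul_nonneg hP0 (by linarith : (0:ℝ) ≤ Q' - Q - (x' - x)),
      mul_nonneg ht (by linarith : (0:ℝ) ≤ Q' - 2 * x'),
      mul_nonneg ht (by linarith : (0:ℝ) ≤ P - 2 * x)]
  · -- x < 0 < x'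
    have hxabs : x + |x| = 0 := by rw [abs_of_neg hx0]; ring
    rcases le_or_gt (x + y) 0 with hxy0 | hxy0
    · -- P = 0, LHS = -x^2
      have hPe : P = 0 := by rw [hPmax, hxabs]; simp [hxy0]
      have : 2 * x' * (2 * x') ≤ P' * Q' := by nlinarith
      nlinarith
    · -- P = x + y, Q = x + z
      have hPe : P = x + y := by rw [hPmax, hxabs]; exact max_eq_left (by linarith)
      have hQe : Q = x + z := by rw [hQmax, hxabs]; exact max_eq_left (by linarith)
      have hstep : (x' + y') * (x' + z') ≤ P' * Q' :=
        mul_le_mul hP'y hQ'z (by linarith) hP'0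
      rw [hPe, hQe]
      have h1 : (0:ℝ) ≤ (x' - x) * (y + z) := mul_nonneg (by linarith) (by linarith)
      have h2 : (0:ℝ) ≤ (y' - y) * (x' + z) := mul_nonneg (by linarith) (by linarith)
      have h3 : (0:ℝ) ≤ (z' - z) * (x' + y') := mul_nonneg (by linarith) (by linarith)
      nlinarith

lemma sort3_sorted (a b c : ℝ) :
    (sort3 a b c).1 ≤ (sort3 a b c).2.1 ∧ (sort3 a b c).2.1 ≤ (sort3 a b c).2.2 := by
  unfold sort3
  rcases le_total a b with h1 | h1 <;> rcases le_total b c with h2 | h2 <;>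
    rcases le_total a c with h3 | h3 <;>
    simp_all [min_def, max_def] <;> first | linarith | (split_ifs <;> linarith)

lemma sort3_mono (a b c a' b' c' : ℝ) (ha : a ≤ a') (hb : b ≤ b') (hc : c ≤ c') :
    (sort3 a b c).1 ≤ (sort3 a' b' c').1 ∧
    (sort3 a b c).2.1 ≤ (sort3 a' b' c').2.1 ∧
    (sort3 a b c).2.2 ≤ (sort3 a' b' c').2.2 := by
  unfold sort3
  exact ⟨min_le_min ha (min_le_min hb hc),
    max_le_max (min_le_min ha hb) (min_le_min hc (max_le_max ha hb)),
    max_le_max ha (max_le_max hb hc)⟩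

theorem stmt_9 (a b c a' b' c' : ℝ) (ha : a ≤ a') (hb : b ≤ b') (hc : c ≤ c') :
    sigmaBar a b c ≤ sigmaBar a' b' c' := by
  obtain ⟨h1, h2⟩ := sort3_sorted a b c
  obtain ⟨h1', h2'⟩ := sort3_sorted a' b' c'
  obtain ⟨m1, m2, m3⟩ := sort3_mono a b c a' b' c' ha hb hc
  exact key _ _ _ _ _ _ h1 h2 h1' h2' m1 m2 m3
end
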